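/- (Lemma 2, Q*(λ) convergence.) Let γ ∈ (0,1) and 0 ≤ λ < (1−γ)/(2γ). Then (γ + λγ)/(1 − λγ) < 1, and for any behavior policy μ and Q-function Q, the iterates Q_k = (R*_λ)^k Q satisfy ‖Q_k − Q*‖ ≤ [(γ+λγ)/(1−λγ)]^k ‖Q − Q*‖; in particular Q_k converges to Q* exponentially fast in sup norm. -/

import Mathlib

/-!
`T` is a `γ`-contraction in sup norm and `P^μ` is a non-expansion. Splitting off the `t = 0`
term, `R*_λ Q − Q* = (T Q − Q*) + ∑_{t≥1} (λγ)^t (P^μ)^t (T Q − Q)`, where the first term has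
norm at most `γ‖Q − Q*‖` and the tail at most `λγ/(1 − λγ) · ‖T Q − Q‖ ≤ λγ(1 + γ)/(1 − λγ) ·
‖Q − Q*‖`. Adding up, `R*_λ` pulls every `Q` towards `Q*` by the factor `(γ + λγ)/(1 − λγ)`,
which is `< 1` exactly when `λ < (1 − γ)/(2γ)`.
-/

open scoped BigOperators

noncomputable section

/-- The operator `P^μ` on Q-functions. -/
def Pop {X A : Type*} [Fintype X] [Fintype A] (P : X → A → X → ℝ) (μ : X → A → ℝ)
    (Q : X × A → ℝ) : X × A → ℝ :=
  fun p => ∑ y : X, ∑ b : A, P p.1 p.2 y * μ y b * Q (y, b)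

/-- The Bellman optimality operator
`(T Q)(x,a) = r(x,a) + γ ∑_{x'} P(x'|x,a) max_{a'} Q(x',a')`. -/
def Topt {X A : Type*} [Fintype X] [Fintype A] [Nonempty A]
    (P : X → A → X → ℝ) (γ : ℝ) (r : X × A → ℝ) (Q : X × A → ℝ) : X × A → ℝ :=
  fun p => r p + γ * ∑ y : X, P p.1 p.2 y * (⨆ b : A, Q (y, b))

/-- The control operator `R*_λ Q = Q + ∑_{t≥0} (λγ)^t (P^μ)^t (T Q − Q)`. -/
def Rstar {X A : Type*} [Fintype X] [Fintype A] [Nonempty A]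
    (P : X → A → X → ℝ) (μ : X → A → ℝ) (γ lam : ℝ) (r : X × A → ℝ)
    (Q : X × A → ℝ) : X × A → ℝ :=
  Q + ∑' t : ℕ, (lam * γ) ^ t • (Pop P μ)^[t] (Topt P γ r Q - Q)

open Filter Topology

section General

theorem abs_sum_mul_le_of_abs_le {ι : Type*} [Fintype ι] {w f : ι → ℝ} {C : ℝ}
    (hw0 : ∀ i, 0 ≤ w i) (hw1 : ∑ i, w i = 1) (hf : ∀ i, |f i| ≤ C) :
    |∑ i, w i * f i| ≤ C :=
  calc |∑ i, w i * f i|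
      ≤ ∑ i, |w i * f i| := Finset.abs_sum_le_sum_abs _ _
    _ ≤ ∑ i, w i * C := Finset.sum_le_sum fun i _ => by
        rw [abs_mul, abs_of_nonneg (hw0 i)]
        exact mul_le_mul_of_nonneg_left (hf i) (hw0 i)
    _ = C := by rw [← Finset.sum_mul, hw1, one_mul]

theorem ciSup_le_ciSup_add {ι : Type*} [Finite ι] [Nonempty ι] {f g : ι → ℝ} {C : ℝ}
    (h : ∀ i, f i ≤ g i + C) : ⨆ i, f i ≤ (⨆ i, g i) + C :=
  ciSup_le fun i => (h i).trans <| add_le_add_left (le_ciSup (Finite.bddAbove_range g) i) C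

theorem abs_ciSup_sub_ciSup_le {ι : Type*} [Finite ι] [Nonempty ι] {f g : ι → ℝ} {C : ℝ}
    (h : ∀ i, |f i - g i| ≤ C) : |(⨆ i, f i) - ⨆ i, g i| ≤ C := by
  rw [abs_sub_le_iff, sub_le_iff_le_add', sub_le_iff_le_add']
  constructor
  · exact ciSup_le_ciSup_add fun i => by linarith [(abs_le.mp (h i)).2]
  · exact ciSup_le_ciSup_add fun i => by linarith [(abs_le.mp (h i)).1]

theorem norm_iterate_sub_le_pow_mul {E : Type*} [SeminormedAddCommGroup E] {f : E → E}
    {x₀ : E} {β : ℝ} (hβ : 0 ≤ β) (hf : ∀ x, ‖f x - x₀‖ ≤ β * ‖x - x₀‖) (x : E) (k : ℕ) :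
    ‖f^[k] x - x₀‖ ≤ β ^ k * ‖x - x₀‖ := by
  induction k with
  | zero => simp
  | succ k ih =>
    rw [Function.iterate_succ_apply', pow_succ', mul_assoc]
    exact (hf _).trans (mul_le_mul_of_nonneg_left ih hβ)

theorem norm_tsum_succ_le_of_geometric_bound {E : Type*} [SeminormedAddCommGroup E]
    {a : ℕ → E} {c C : ℝ} (hc0 : 0 ≤ c) (hc1 : c < 1) (ha : ∀ t, ‖a t‖ ≤ c ^ t * C) :
    ‖∑' t, a (t + 1)‖ ≤ c / (1 - c) * C := by
  have hgeom : HasSum (fun t : ℕ => c ^ (t + 1) * C) (c / (1 - c) * C) := by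
    simpa only [pow_succ', div_eq_mul_inv] using
      ((hasSum_geometric_of_lt_one hc0 hc1).mul_left c).mul_right C
  exact tsum_of_norm_bounded hgeom fun t => ha (t + 1)

end General

section MDP

variable {X A : Type*} [Fintype X] [Fintype A]

theorem norm_Pop_le (P : X → A → X → ℝ)
    (hP0 : ∀ x a y, 0 ≤ P x a y) (hP1 : ∀ x a, ∑ y : X, P x a y = 1)
    (μ : X → A → ℝ) (hμ0 : ∀ x a, 0 ≤ μ x a) (hμ1 : ∀ x, ∑ a : A, μ x a = 1)
    (Q : X × A → ℝ) : ‖Pop P μ Q‖ ≤ ‖Q‖ := by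
  refine (pi_norm_le_iff_of_nonneg (norm_nonneg Q)).mpr fun p => ?_
  have hPop : Pop P μ Q p = ∑ y, P p.1 p.2 y * ∑ b, μ y b * Q (y, b) := by
    simp only [Pop, Finset.mul_sum, mul_assoc]
  rw [hPop, Real.norm_eq_abs]
  refine abs_sum_mul_le_of_abs_le (hP0 _ _) (hP1 _ _) fun y => ?_
  exact abs_sum_mul_le_of_abs_le (hμ0 y) (hμ1 y) fun b => norm_le_pi_norm Q (y, b)

theorem norm_Pop_iterate_le (P : X → A → X → ℝ)
    (hP0 : ∀ x a y, 0 ≤ P x a y) (hP1 : ∀ x a, ∑ y : X, P x a y = 1)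
    (μ : X → A → ℝ) (hμ0 : ∀ x a, 0 ≤ μ x a) (hμ1 : ∀ x, ∑ a : A, μ x a = 1)
    (Q : X × A → ℝ) (t : ℕ) : ‖(Pop P μ)^[t] Q‖ ≤ ‖Q‖ := by
  simpa using norm_iterate_sub_le_pow_mul (x₀ := 0) zero_le_one
    (by simpa using norm_Pop_le P hP0 hP1 μ hμ0 hμ1) Q t

variable [Nonempty A]

theorem norm_Topt_sub_Topt_le (P : X → A → X → ℝ)
    (hP0 : ∀ x a y, 0 ≤ P x a y) (hP1 : ∀ x a, ∑ y : X, P x a y = 1)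
    {γ : ℝ} (hγ : 0 ≤ γ) (r : X × A → ℝ) (Q₁ Q₂ : X × A → ℝ) :
    ‖Topt P γ r Q₁ - Topt P γ r Q₂‖ ≤ γ * ‖Q₁ - Q₂‖ := by
  refine (pi_norm_le_iff_of_nonneg (mul_nonneg hγ (norm_nonneg _))).mpr fun p => ?_
  have hdiff : (Topt P γ r Q₁ - Topt P γ r Q₂) p
      = γ * ∑ y, P p.1 p.2 y * ((⨆ b, Q₁ (y, b)) - ⨆ b, Q₂ (y, b)) := by
    simp only [Pi.sub_apply, Topt, mul_sub, Finset.sum_sub_distrib]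
    ring
  rw [hdiff, Real.norm_eq_abs, abs_mul, abs_of_nonneg hγ]
  refine mul_le_mul_of_nonneg_left ?_ hγ
  refine abs_sum_mul_le_of_abs_le (hP0 _ _) (hP1 _ _) fun y => ?_
  exact abs_ciSup_sub_ciSup_le fun b => norm_le_pi_norm (Q₁ - Q₂) (y, b)

theorem norm_Rstar_sub_fixedPoint_le (P : X → A → X → ℝ)
    (hP0 : ∀ x a y, 0 ≤ P x a y) (hP1 : ∀ x a, ∑ y : X, P x a y = 1)
    (μ : X → A → ℝ) (hμ0 : ∀ x a, 0 ≤ μ x a) (hμ1 : ∀ x, ∑ a : A, μ x a = 1)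
    {γ lam : ℝ} (hγ : 0 ≤ γ) (hl0 : 0 ≤ lam) (hc1 : lam * γ < 1)
    (r : X × A → ℝ) {Qstar : X × A → ℝ} (hQstar : Topt P γ r Qstar = Qstar)
    (Q : X × A → ℝ) :
    ‖Rstar P μ γ lam r Q - Qstar‖ ≤ (γ + lam * γ) / (1 - lam * γ) * ‖Q - Qstar‖ := by
  set c := lam * γ
  have hc0 : 0 ≤ c := mul_nonneg hl0 hγ
  set D := Topt P γ r Q - Q
  set a : ℕ → X × A → ℝ := fun t => c ^ t • (Pop P μ)^[t] D
  have ha : ∀ t, ‖a t‖ ≤ c ^ t * ‖D‖ := fun t => by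
    rw [norm_smul, Real.norm_eq_abs, abs_of_nonneg (pow_nonneg hc0 t)]
    exact mul_le_mul_of_nonneg_left (norm_Pop_iterate_le P hP0 hP1 μ hμ0 hμ1 D t)
      (pow_nonneg hc0 t)
  have hsum : Summable a :=
    .of_norm_bounded ((summable_geometric_of_lt_one hc0 hc1).mul_right _) ha
  have hsplit : Rstar P μ γ lam r Q - Qstar = (Topt P γ r Q - Qstar) + ∑' t, a (t + 1) := by
    change Q + ∑' t, a t - Qstar = _
    rw [hsum.tsum_eq_zero_add]
    simp only [a, D, pow_zero, one_smul, Function.iterate_zero, id]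
    abel
  have hT : ‖Topt P γ r Q - Qstar‖ ≤ γ * ‖Q - Qstar‖ := by
    simpa only [hQstar] using norm_Topt_sub_Topt_le P hP0 hP1 hγ r Q Qstar
  have hD : ‖D‖ ≤ (1 + γ) * ‖Q - Qstar‖ :=
    calc ‖D‖ = ‖(Topt P γ r Q - Qstar) - (Q - Qstar)‖ := by simp only [D, sub_sub_sub_cancel_right]
      _ ≤ γ * ‖Q - Qstar‖ + ‖Q - Qstar‖ := (norm_sub_le _ _).trans (by linarith)
      _ = (1 + γ) * ‖Q - Qstar‖ := by ring
  have htail := norm_tsum_succ_le_of_geometric_bound hc0 hc1 ha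
  have h1c : 0 < 1 - c := by linarith
  calc ‖Rstar P μ γ lam r Q - Qstar‖
      ≤ γ * ‖Q - Qstar‖ + c / (1 - c) * ((1 + γ) * ‖Q - Qstar‖) := by
        rw [hsplit]
        refine (norm_add_le _ _).trans (add_le_add hT (htail.trans ?_))
        exact mul_le_mul_of_nonneg_left hD (div_nonneg hc0 h1c.le)
    _ = (γ + c) / (1 - c) * ‖Q - Qstar‖ := by field_simp; ring

end MDP

theorem contraction_factor_lt_one {γ lam : ℝ} (hγ0 : 0 < γ) (hl0 : 0 ≤ lam)
    (hl1 : lam < (1 - γ) / (2 * γ)) :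
    lam * γ < 1 ∧ 0 ≤ (γ + lam * γ) / (1 - lam * γ) ∧ (γ + lam * γ) / (1 - lam * γ) < 1 := by
  have hc : 2 * (lam * γ) < 1 - γ := by
    have := (lt_div_iff₀ (by positivity : (0 : ℝ) < 2 * γ)).mp hl1
    linarith
  have hc0 : 0 ≤ lam * γ := mul_nonneg hl0 hγ0.le
  have hden : 0 < 1 - lam * γ := by linarith
  exact ⟨by linarith, div_nonneg (by linarith) hden.le, (div_lt_one hden).mpr (by linarith)⟩

theorem stmt14_general {X A : Type*} [Fintype X] [Fintype A] [Nonempty A]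
    (P : X → A → X → ℝ)
    (hP0 : ∀ x a y, 0 ≤ P x a y) (hP1 : ∀ x a, ∑ y : X, P x a y = 1)
    (μ : X → A → ℝ)
    (hμ0 : ∀ x a, 0 ≤ μ x a) (hμ1 : ∀ x, ∑ a : A, μ x a = 1)
    (γ : ℝ) (hγ0 : 0 < γ)
    (lam : ℝ) (hl0 : 0 ≤ lam) (hl1 : lam < (1 - γ) / (2 * γ))
    (r : X × A → ℝ) (Qstar : X × A → ℝ)
    (hQstar : Topt P γ r Qstar = Qstar)
    (Q : X × A → ℝ) :
    (γ + lam * γ) / (1 - lam * γ) < 1 ∧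
    (∀ k : ℕ,
      ‖(Rstar P μ γ lam r)^[k] Q - Qstar‖ ≤
        ((γ + lam * γ) / (1 - lam * γ)) ^ k * ‖Q - Qstar‖) ∧
    Tendsto (fun k : ℕ => (Rstar P μ γ lam r)^[k] Q) atTop (𝓝 Qstar) := by
  obtain ⟨hc1, hβ0, hβ1⟩ := contraction_factor_lt_one hγ0 hl0 hl1
  have hbound := norm_iterate_sub_le_pow_mul hβ0
    (norm_Rstar_sub_fixedPoint_le P hP0 hP1 μ hμ0 hμ1 hγ0.le hl0 hc1 r hQstar) Q
  refine ⟨hβ1, hbound, tendsto_iff_norm_sub_tendsto_zero.mpr ?_⟩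
  refine squeeze_zero (fun k => norm_nonneg _) hbound ?_
  simpa using (tendsto_pow_atTop_nhds_zero_of_lt_one hβ0 hβ1).mul_const ‖Q - Qstar‖

/-- Lemma 2: for `γ ∈ (0,1)` and `0 ≤ λ < (1−γ)/(2γ)`, the coefficient
`(γ + λγ)/(1 − λγ)` is below 1, the iterates `Q_k = (R*_λ)^k Q` satisfy
`‖Q_k − Q*‖ ≤ [(γ+λγ)/(1−λγ)]^k ‖Q − Q*‖`, and `Q_k → Q*` exponentially fast. -/
theorem stmt14 {X A : Type*} [Fintype X] [Fintype A] [Nonempty X] [Nonempty A]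
    (P : X → A → X → ℝ)
    (hP0 : ∀ x a y, 0 ≤ P x a y) (hP1 : ∀ x a, ∑ y : X, P x a y = 1)
    (μ : X → A → ℝ)
    (hμ0 : ∀ x a, 0 ≤ μ x a) (hμ1 : ∀ x, ∑ a : A, μ x a = 1)
    (γ : ℝ) (hγ0 : 0 < γ) (hγ1 : γ < 1)
    (lam : ℝ) (hl0 : 0 ≤ lam) (hl1 : lam < (1 - γ) / (2 * γ))
    (r : X × A → ℝ) (Qstar : X × A → ℝ)
    (hQstar : Topt P γ r Qstar = Qstar)
    (Q : X × A → ℝ) :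
    (γ + lam * γ) / (1 - lam * γ) < 1 ∧
    (∀ k : ℕ,
      ‖(Rstar P μ γ lam r)^[k] Q - Qstar‖ ≤
        ((γ + lam * γ) / (1 - lam * γ)) ^ k * ‖Q - Qstar‖) ∧
    Tendsto (fun k : ℕ => (Rstar P μ γ lam r)^[k] Q) atTop (𝓝 Qstar) :=
  stmt14_general P hP0 hP1 μ hμ0 hμ1 γ hγ0 lam hl0 hl1 r Qstar hQstar Q
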